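/- Let f and f̂ be two continuous strictly positive probability densities on [0,1] such that f, f̂ and u'' are all logconcave and the likelihood ratio f̂(t)/f(t) is nondecreasing in t. Let (0 = s₀ < s₁ < … < s_N = 1; x₁,…,x_N) be a solution of the dual system for (f, u), and let (0 = ŝ₀ < ŝ₁ < … < ŝ_N = 1; x̂₁,…,x̂_N) be a solution of the dual system for (f̂, u), i.e., with φ replaced by the conditional mean φ̂ computed from f̂. Then ŝ_k ≥ s_k for all k = 1,…,N−1 and x̂_k ≥ x_k for all k = 1,…,N. -/

import Mathlib

/-!
Let `δ` be the largest of the gaps `s k - ŝ k` and `x k - x̂ k`, and suppose `δ > 0`. For a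
logconcave density `g` the ratio `g (t - δ) / g t` is nondecreasing, so by Chebyshev's
inequality, lowering both endpoints of an interval by at most `δ`, the left one by strictly
less, lowers the conditional mean by strictly less than `δ`. Passing from `f` to `f̂` only
raises conditional means, by the same inequality applied to the ratio `f̂ / f`. Starting from
`s 0 = ŝ 0`, cutoffs and signals alternately inherit a gap below `δ`, so no gap attains `δ`.
-/

open MeasureTheory Set

/-- The mean of the "density" `g` conditional on the interval `(a, b)`. -/
noncomputable def condMean (g : ℝ → ℝ) (a b : ℝ) : ℝ :=
  (∫ t in a..b, t * g t) / (∫ t in a..b, g t)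

/-- A strictly positive function on `[0,1]` is logconcave if its log is concave there. -/
def LogConcaveOn01 (g : ℝ → ℝ) : Prop :=
  ConcaveOn ℝ (Icc (0:ℝ) 1) fun t => Real.log (g t)

/-- The dual system: cutoffs `0 = s 0 < s 1 < … < s N = 1` and signals `x 1, …, x N`. -/
def DualSystem (g w : ℝ → ℝ) (N : ℕ) (s x : ℕ → ℝ) : Prop :=
  s 0 = 0 ∧ s N = 1 ∧ (∀ k < N, s k < s (k + 1)) ∧
    (∀ k, 1 ≤ k → k ≤ N → x k = condMean g (s (k - 1)) (s k)) ∧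
    (∀ k, 1 ≤ k → k ≤ N - 1 → s k = condMean w (x k) (x (k + 1)))

section CondMean

variable {g h : ℝ → ℝ} {a b c : ℝ}

lemma integral_sub_mul (hg : Continuous g) :
    ∫ t in a..b, (t - c) * g t = (∫ t in a..b, t * g t) - c * ∫ t in a..b, g t := by
  simp_rw [sub_mul]
  rw [intervalIntegral.integral_sub
    ((by fun_prop : Continuous fun t => t * g t).intervalIntegrable a b)
    ((by fun_prop : Continuous fun t => c * g t).intervalIntegrable a b),
    intervalIntegral.integral_const_mul]

lemma integral_pos_of_forall_mem_Icc (hg : Continuous g) (hpos : ∀ t ∈ Icc a b, 0 < g t)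
    (hab : a < b) : 0 < ∫ t in a..b, g t :=
  intervalIntegral.intervalIntegral_pos_of_pos_on (hg.intervalIntegrable a b)
    (fun t ht => hpos t (Ioo_subset_Icc_self ht)) hab

lemma lt_condMean_iff (hg : Continuous g) (h0 : 0 < ∫ t in a..b, g t) :
    c < condMean g a b ↔ 0 < ∫ t in a..b, (t - c) * g t := by
  rw [condMean, lt_div_iff₀ h0, integral_sub_mul hg, sub_pos, mul_comm]

lemma condMean_lt_iff (hg : Continuous g) (h0 : 0 < ∫ t in a..b, g t) :
    condMean g a b < c ↔ ∫ t in a..b, (t - c) * g t < 0 := by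
  rw [condMean, div_lt_iff₀ h0, integral_sub_mul hg, sub_neg, mul_comm]

lemma integral_sub_condMean_mul (hg : Continuous g) (h0 : ∫ t in a..b, g t ≠ 0) :
    ∫ t in a..b, (t - condMean g a b) * g t = 0 := by
  rw [integral_sub_mul hg, condMean, div_mul_cancel₀ _ h0, sub_self]

lemma condMean_mem_Ioo (hg : Continuous g) (hpos : ∀ t ∈ Icc a b, 0 < g t) (hab : a < b) :
    condMean g a b ∈ Ioo a b := by
  have h0 := integral_pos_of_forall_mem_Icc hg hpos hab
  have hint : ∀ c, IntervalIntegrable (fun t => (t - c) * g t) volume a b := fun c =>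
    ((continuous_id.sub continuous_const).mul hg).intervalIntegrable a b
  refine ⟨(lt_condMean_iff hg h0).2 ?_, (condMean_lt_iff hg h0).2 ?_⟩
  · exact intervalIntegral.intervalIntegral_pos_of_pos_on (hint a)
      (fun t ht => mul_pos (sub_pos.2 ht.1) (hpos t (Ioo_subset_Icc_self ht))) hab
  · have := intervalIntegral.intervalIntegral_pos_of_pos_on
      (f := fun t => -((t - b) * g t)) (hint b).neg (fun t ht => neg_pos.2 <|
      mul_neg_of_neg_of_pos (sub_neg.2 ht.2) (hpos t (Ioo_subset_Icc_self ht))) hab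
    rwa [intervalIntegral.integral_neg, neg_pos] at this

lemma condMean_lt_condMean_of_mem_Ioo (hg : Continuous g) (hpos : ∀ t ∈ Icc a b, 0 < g t)
    {m : ℝ} (hm : m ∈ Ioo a b) :
    condMean g a m < condMean g a b ∧ condMean g a b < condMean g m b := by
  have hpos₁ : ∀ t ∈ Icc a m, 0 < g t := fun t ht => hpos t ⟨ht.1, ht.2.trans hm.2.le⟩
  have hpos₂ : ∀ t ∈ Icc m b, 0 < g t := fun t ht => hpos t ⟨hm.1.le.trans ht.1, ht.2⟩
  have h₀ := integral_pos_of_forall_mem_Icc hg hpos (hm.1.trans hm.2)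
  have h₁ := integral_pos_of_forall_mem_Icc hg hpos₁ hm.1
  have h₂ := integral_pos_of_forall_mem_Icc hg hpos₂ hm.2
  have hsplit : ∀ c, ∫ t in a..b, (t - c) * g t
      = (∫ t in a..m, (t - c) * g t) + ∫ t in m..b, (t - c) * g t := fun c =>
    (intervalIntegral.integral_add_adjacent_intervals
      (Continuous.intervalIntegrable (by fun_prop) _ _)
      (Continuous.intervalIntegrable (by fun_prop) _ _)).symm
  have hmid : condMean g a m < condMean g m b :=
    (condMean_mem_Ioo hg hpos₁ hm.1).2.trans (condMean_mem_Ioo hg hpos₂ hm.2).1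
  constructor
  · rw [lt_condMean_iff hg h₀, hsplit, integral_sub_condMean_mul hg h₁.ne', zero_add]
    exact (lt_condMean_iff hg h₂).1 hmid
  · rw [condMean_lt_iff hg h₀, hsplit, integral_sub_condMean_mul hg h₂.ne', add_zero]
    exact (condMean_lt_iff hg h₁).1 hmid

lemma condMean_lt_condMean (hg : Continuous g) {a' b' : ℝ} (hpos : ∀ t ∈ Icc a b', 0 < g t)
    (hab : a < b) (ha : a < a') (hb : b ≤ b') (hab' : a' < b') :
    condMean g a b < condMean g a' b' := by
  have hsub : ∀ {p q}, a ≤ p → q ≤ b' → ∀ t ∈ Icc p q, 0 < g t :=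
    fun hp hq t ht => hpos t ⟨hp.trans ht.1, ht.2.trans hq⟩
  rcases lt_or_ge a' b with ha'b | hba'
  · calc condMean g a b < condMean g a' b :=
          (condMean_lt_condMean_of_mem_Ioo hg (hsub le_rfl hb) ⟨ha, ha'b⟩).2
      _ ≤ condMean g a' b' := by
          rcases hb.eq_or_lt with rfl | hb
          · rfl
          · exact (condMean_lt_condMean_of_mem_Ioo hg (hsub ha.le le_rfl) ⟨ha'b, hb⟩).1.le
  · calc condMean g a b < b := (condMean_mem_Ioo hg (hsub le_rfl hb) hab).2
      _ ≤ a' := hba'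
      _ < condMean g a' b' := (condMean_mem_Ioo hg (hsub ha.le le_rfl) hab').1

lemma condMean_le_condMean (hg : Continuous g) {a' b' : ℝ} (hpos : ∀ t ∈ Icc a b', 0 < g t)
    (hab : a < b) (ha : a ≤ a') (hb : b ≤ b') (hab' : a' < b') :
    condMean g a b ≤ condMean g a' b' := by
  rcases ha.eq_or_lt with rfl | ha
  · rcases hb.eq_or_lt with rfl | hb
    · rfl
    · exact (condMean_lt_condMean_of_mem_Ioo hg hpos ⟨hab, hb⟩).1.le
  · exact (condMean_lt_condMean hg hpos hab ha hb hab').le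

/-- Chebyshev's integral inequality, in the form of a monotone likelihood ratio. -/
lemma condMean_le_condMean_of_monotoneOn_div (hg : Continuous g) (hh : Continuous h)
    (hgpos : ∀ t ∈ Icc a b, 0 < g t) (hhpos : ∀ t ∈ Icc a b, 0 < h t) (hab : a < b)
    (hmono : MonotoneOn (fun t => h t / g t) (Icc a b)) :
    condMean g a b ≤ condMean h a b := by
  set m := condMean g a b
  set r := h m / g m
  have hm : m ∈ Icc a b := Ioo_subset_Icc_self (condMean_mem_Ioo hg hgpos hab)
  have hnonneg : 0 ≤ ∫ t in a..b, (t - m) * (h t / g t - r) * g t := by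
    refine intervalIntegral.integral_nonneg hab.le fun t ht => mul_nonneg ?_ (hgpos t ht).le
    rcases le_total t m with htm | hmt
    · exact mul_nonneg_of_nonpos_of_nonpos (sub_nonpos.2 htm) (sub_nonpos.2 (hmono ht hm htm))
    · exact mul_nonneg (sub_nonneg.2 hmt) (sub_nonneg.2 (hmono hm ht hmt))
  have hexpand : ∫ t in a..b, (t - m) * (h t / g t - r) * g t
      = (∫ t in a..b, (t - m) * h t) - r * ∫ t in a..b, (t - m) * g t := by
    rw [← intervalIntegral.integral_const_mul,
      ← intervalIntegral.integral_sub (Continuous.intervalIntegrable (by fun_prop) _ _)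
        (Continuous.intervalIntegrable (by fun_prop) _ _)]
    refine intervalIntegral.integral_congr fun t ht => ?_
    have := (hgpos t (uIcc_of_le hab.le ▸ ht)).ne'
    field_simp
  rw [integral_sub_condMean_mul hg (integral_pos_of_forall_mem_Icc hg hgpos hab).ne',
    mul_zero, sub_zero] at hexpand
  refine le_of_not_gt fun hlt => ?_
  have := (condMean_lt_iff hh (integral_pos_of_forall_mem_Icc hh hhpos hab)).1 hlt
  linarith

lemma condMean_comp_sub_right (hg : Continuous g) {δ : ℝ}
    (h0 : ∫ t in (a - δ)..(b - δ), g t ≠ 0) :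
    condMean (fun t => g (t - δ)) a b = condMean g (a - δ) (b - δ) + δ := by
  have hshift : ∫ t in a..b, t * g (t - δ) = ∫ t in (a - δ)..(b - δ), (t - -δ) * g t := by
    rw [← intervalIntegral.integral_comp_sub_right (fun t => (t - -δ) * g t)]
    simp only [sub_neg_eq_add, sub_add_cancel]
  rw [condMean, condMean, hshift, intervalIntegral.integral_comp_sub_right g, integral_sub_mul hg]
  field_simp
  ring

end CondMean

lemma ConcaveOn.sub_le_sub_of_shift {φ : ℝ → ℝ} {s : Set ℝ} (hφ : ConcaveOn ℝ s φ)
    {δ t t' : ℝ} (hδ : 0 < δ) (ht : t - δ ∈ s) (ht' : t' ∈ s) (htt' : t ≤ t') :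
    φ t' - φ (t' - δ) ≤ φ t - φ (t - δ) := by
  have hmem := hφ.1.ordConnected.out ht ht'
  have hA : slope φ (t - δ) t' ≤ slope φ (t - δ) t :=
    hφ.slope_anti ht ⟨hmem ⟨by linarith, htt'⟩, (by linarith : t - δ < t).ne'⟩
      ⟨ht', (by linarith : t - δ < t').ne'⟩ htt'
  have hB : slope φ t' (t' - δ) ≤ slope φ t' (t - δ) :=
    hφ.slope_anti ht' ⟨ht, (by linarith : t - δ < t').ne⟩
      ⟨hmem ⟨by linarith, by linarith⟩, (by linarith : t' - δ < t').ne⟩ (by linarith)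
  rw [slope_comm φ t', slope_comm φ t'] at hB
  have key := hB.trans hA
  rwa [slope_def_field, slope_def_field, sub_sub_cancel, sub_sub_cancel,
    div_le_div_iff_of_pos_right hδ] at key

section LogConcave

variable {g : ℝ → ℝ} {a b δ : ℝ}

lemma LogConcaveOn01.monotoneOn_comp_sub_div (hlc : LogConcaveOn01 g)
    (hpos : ∀ t ∈ Icc (0:ℝ) 1, 0 < g t) (hδ : 0 < δ) (ha : δ ≤ a) (hb : b ≤ 1) :
    MonotoneOn (fun t => g (t - δ) / g t) (Icc a b) := by
  intro t ht t' ht' htt'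
  have hmem : ∀ p ∈ Icc a b, p - δ ∈ Icc (0:ℝ) 1 ∧ p ∈ Icc (0:ℝ) 1 := fun p hp =>
    ⟨⟨by linarith [hp.1], by linarith [hp.2]⟩, ⟨by linarith [hp.1], hp.2.trans hb⟩⟩
  have hpos' : ∀ p ∈ Icc a b, 0 < g (p - δ) ∧ 0 < g p := fun p hp =>
    ⟨hpos _ (hmem p hp).1, hpos _ (hmem p hp).2⟩
  have key := ConcaveOn.sub_le_sub_of_shift hlc hδ (hmem t ht).1 (hmem t' ht').2 htt'
  dsimp only
  rw [← Real.log_le_log_iff (div_pos (hpos' t ht).1 (hpos' t ht).2)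
      (div_pos (hpos' t' ht').1 (hpos' t' ht').2),
    Real.log_div (hpos' t ht).1.ne' (hpos' t ht).2.ne',
    Real.log_div (hpos' t' ht').1.ne' (hpos' t' ht').2.ne']
  linarith

lemma sub_le_condMean_sub (hg : Continuous g) (hpos : ∀ t ∈ Icc (0:ℝ) 1, 0 < g t)
    (hlc : LogConcaveOn01 g) (hδ : 0 < δ) (ha : δ ≤ a) (hab : a < b) (hb : b ≤ 1) :
    condMean g a b - δ ≤ condMean g (a - δ) (b - δ) := by
  have hcheb := condMean_le_condMean_of_monotoneOn_div (h := fun t => g (t - δ)) hg (by fun_prop)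
    (fun t ht => hpos t ⟨by linarith [ht.1], ht.2.trans hb⟩)
    (fun t ht => hpos _ ⟨by linarith [ht.1], by linarith [ht.2]⟩) hab
    (hlc.monotoneOn_comp_sub_div hpos hδ ha hb)
  rw [condMean_comp_sub_right hg (integral_pos_of_forall_mem_Icc hg
    (fun t ht => hpos t ⟨by linarith [ht.1], by linarith [ht.2]⟩) (by linarith)).ne'] at hcheb
  linarith

lemma sub_lt_condMean (hg : Continuous g) (hpos : ∀ t ∈ Icc (0:ℝ) 1, 0 < g t)
    (hlc : LogConcaveOn01 g) (hδ : 0 < δ) {a' b' : ℝ}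
    (ha : 0 ≤ a) (hab : a < b) (hb : b ≤ 1) (ha' : 0 ≤ a') (hab' : a' < b') (hb' : b' ≤ 1)
    (hleft : a - δ < a') (hright : b - δ ≤ b') :
    condMean g a b - δ < condMean g a' b' := by
  have hsub : ∀ {p q}, 0 ≤ p → q ≤ 1 → ∀ t ∈ Icc p q, 0 < g t :=
    fun hp hq t ht => hpos t ⟨hp.trans ht.1, ht.2.trans hq⟩
  rcases le_or_gt b δ with hbδ | hδb
  · have h₁ := (condMean_mem_Ioo hg (hsub ha hb) hab).2
    have h₂ := (condMean_mem_Ioo hg (hsub ha' hb') hab').1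
    linarith
  rcases le_or_gt δ a with hδa | haδ
  · calc condMean g a b - δ ≤ condMean g (a - δ) (b - δ) :=
          sub_le_condMean_sub hg hpos hlc hδ hδa hab hb
      _ < condMean g a' b' :=
          condMean_lt_condMean hg (hsub (by linarith) hb') (by linarith) hleft hright hab'
  · -- the shifted interval would leave `[0, 1]`: first cut it at `δ`, which raises the mean
    calc condMean g a b - δ < condMean g δ b - δ := by
          gcongr; exact condMean_lt_condMean hg (hsub ha hb) hab haδ le_rfl hδb
      _ ≤ condMean g (δ - δ) (b - δ) := sub_le_condMean_sub hg hpos hlc hδ le_rfl hδb hb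
      _ ≤ condMean g a' b' := by
          rw [sub_self]
          exact condMean_le_condMean hg (hsub le_rfl hb') (by linarith) ha' hright hab'

end LogConcave

namespace DualSystem

variable {g w : ℝ → ℝ} {N : ℕ} {s x : ℕ → ℝ}

lemma cutoff_mem_Icc (h : DualSystem g w N s x) {k : ℕ} (hk : k ≤ N) :
    s k ∈ Icc (0:ℝ) 1 := by
  obtain ⟨hs0, hsN, hsinc, -⟩ := h
  have hmono : MonotoneOn s (Iic N) :=
    (strictMonoOn_Iic_of_lt_succ fun m hm => by simpa using hsinc m hm).monotoneOn
  exact ⟨hs0 ▸ hmono (Nat.zero_le N) hk (Nat.zero_le k),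
    hsN ▸ hmono hk (mem_Iic.2 le_rfl) hk⟩

lemma signal_eq (h : DualSystem g w N s x) {k : ℕ} (hk : k < N) :
    x (k + 1) = condMean g (s k) (s (k + 1)) := by
  simpa using h.2.2.2.1 (k + 1) (by omega) hk

lemma cutoff_eq (h : DualSystem g w N s x) {k : ℕ} (hk : k + 2 ≤ N) :
    s (k + 1) = condMean w (x (k + 1)) (x (k + 2)) :=
  h.2.2.2.2 (k + 1) (by omega) (by omega)

lemma signal_mem_Ioo (h : DualSystem g w N s x) (hg : Continuous g)
    (hpos : ∀ t ∈ Icc (0:ℝ) 1, 0 < g t) {k : ℕ} (hk : k < N) :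
    x (k + 1) ∈ Ioo (s k) (s (k + 1)) := by
  rw [h.signal_eq hk]
  exact condMean_mem_Ioo hg (fun t ht => hpos t ⟨(h.cutoff_mem_Icc hk.le).1.trans ht.1,
    ht.2.trans (h.cutoff_mem_Icc hk).2⟩) (h.2.2.1 k hk)

end DualSystem

section Comparison

variable {f fhat w : ℝ → ℝ} {N k : ℕ} {s x shat xhat : ℕ → ℝ} {δ : ℝ}

lemma signal_sub_lt (hf : Continuous f) (hf_pos : ∀ t ∈ Icc (0:ℝ) 1, 0 < f t)
    (hfhat : Continuous fhat) (hfhat_pos : ∀ t ∈ Icc (0:ℝ) 1, 0 < fhat t)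
    (hf_lc : LogConcaveOn01 f) (hratio : MonotoneOn (fun t => fhat t / f t) (Icc (0:ℝ) 1))
    (h : DualSystem f w N s x) (hhat : DualSystem fhat w N shat xhat) (hk : k < N)
    (hδ : 0 < δ) (hs : s k - shat k < δ) (hs' : s (k + 1) - shat (k + 1) ≤ δ) :
    x (k + 1) - xhat (k + 1) < δ := by
  obtain ⟨ha, -⟩ := h.cutoff_mem_Icc hk.le
  obtain ⟨-, hb⟩ := h.cutoff_mem_Icc hk
  obtain ⟨ha', -⟩ := hhat.cutoff_mem_Icc hk.le
  obtain ⟨-, hb'⟩ := hhat.cutoff_mem_Icc hk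
  have hab' := hhat.2.2.1 k hk
  have hmean := sub_lt_condMean hf hf_pos hf_lc hδ ha (h.2.2.1 k hk) hb ha' hab' hb'
    (by linarith) (by linarith)
  have hmlr := condMean_le_condMean_of_monotoneOn_div hf hfhat
    (fun t ht => hf_pos t ⟨ha'.trans ht.1, ht.2.trans hb'⟩)
    (fun t ht => hfhat_pos t ⟨ha'.trans ht.1, ht.2.trans hb'⟩) hab'
    (hratio.mono (Icc_subset_Icc ha' hb'))
  rw [h.signal_eq hk, hhat.signal_eq hk]
  linarith

lemma cutoff_sub_lt (hf : Continuous f) (hf_pos : ∀ t ∈ Icc (0:ℝ) 1, 0 < f t)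
    (hfhat : Continuous fhat) (hfhat_pos : ∀ t ∈ Icc (0:ℝ) 1, 0 < fhat t)
    (hw : Continuous w) (hw_pos : ∀ t ∈ Icc (0:ℝ) 1, 0 < w t) (hw_lc : LogConcaveOn01 w)
    (h : DualSystem f w N s x) (hhat : DualSystem fhat w N shat xhat) (hk : k + 2 ≤ N)
    (hδ : 0 < δ) (hx : x (k + 1) - xhat (k + 1) < δ) (hx' : x (k + 2) - xhat (k + 2) ≤ δ) :
    s (k + 1) - shat (k + 1) < δ := by
  have h₁ := h.signal_mem_Ioo hf hf_pos (k := k) (by omega)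
  have h₂ : x (k + 2) ∈ Ioo (s (k + 1)) (s (k + 2)) := h.signal_mem_Ioo hf hf_pos (by omega)
  have h₁' := hhat.signal_mem_Ioo hfhat hfhat_pos (k := k) (by omega)
  have h₂' : xhat (k + 2) ∈ Ioo (shat (k + 1)) (shat (k + 2)) :=
    hhat.signal_mem_Ioo hfhat hfhat_pos (by omega)
  obtain ⟨ha, -⟩ := h.cutoff_mem_Icc (k := k) (by omega)
  obtain ⟨-, hb⟩ := h.cutoff_mem_Icc hk
  obtain ⟨ha', -⟩ := hhat.cutoff_mem_Icc (k := k) (by omega)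
  obtain ⟨-, hb'⟩ := hhat.cutoff_mem_Icc hk
  have := sub_lt_condMean hw hw_pos hw_lc hδ (by linarith [h₁.1]) (by linarith [h₁.2, h₂.1])
    (by linarith [h₂.2]) (by linarith [h₁'.1]) (by linarith [h₁'.2, h₂'.1])
    (by linarith [h₂'.2]) (by linarith : x (k + 1) - δ < xhat (k + 1))
    (by linarith : x (k + 2) - δ ≤ xhat (k + 2))
  rw [h.cutoff_eq hk, hhat.cutoff_eq hk]
  linarith

end Comparison

/-- A discrete maximum principle, applied at the largest gap `δ`. -/
lemma gaps_nonpos_of_propagation {N : ℕ} (hN : 0 < N) {D E : ℕ → ℝ} (hD₀ : D 0 ≤ 0)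
    (hD_N : D N ≤ 0)
    (hE : ∀ k < N, ∀ δ > 0, D k < δ → D (k + 1) ≤ δ → E k < δ)
    (hD : ∀ k, k + 1 < N → ∀ δ > 0, E k < δ → E (k + 1) ≤ δ → D (k + 1) < δ) :
    ∀ k < N, D k ≤ 0 ∧ E k ≤ 0 := by
  obtain ⟨k₀, hk₀, hmax⟩ :=
    Finset.exists_max_image (Finset.range N) (fun k => max (D k) (E k)) ⟨0, by simpa⟩
  set δ := max (D k₀) (E k₀)
  have hle : ∀ k < N, D k ≤ δ ∧ E k ≤ δ := fun k hk =>
    max_le_iff.1 (hmax k (Finset.mem_range.2 hk))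
  suffices hδ : δ ≤ 0 from fun k hk => ⟨(hle k hk).1.trans hδ, (hle k hk).2.trans hδ⟩
  by_contra! hδ
  have hD_le : ∀ k ≤ N, D k ≤ δ := fun k hk => by
    rcases hk.lt_or_eq with hk | rfl
    · exact (hle k hk).1
    · linarith
  have hlt : ∀ k < N, D k < δ ∧ E k < δ := by
    intro k hk
    induction k with
    | zero => exact ⟨by linarith, hE 0 hk δ hδ (by linarith) (hD_le 1 hk)⟩
    | succ k ih =>
      have hDk := hD k hk δ hδ (ih (by omega)).2 (hle (k + 1) hk).2
      exact ⟨hDk, hE (k + 1) hk δ hδ hDk (hD_le (k + 2) hk)⟩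
  have := hlt k₀ (Finset.mem_range.1 hk₀)
  exact (max_lt this.1 this.2).false

theorem stmt_6_general (f fhat u : ℝ → ℝ) (N : ℕ) (hN : 2 ≤ N)
    (hf_cont : Continuous f) (hf_pos : ∀ t ∈ Icc (0:ℝ) 1, 0 < f t)
    (hfhat_cont : Continuous fhat) (hfhat_pos : ∀ t ∈ Icc (0:ℝ) 1, 0 < fhat t)
    (hu : ContDiff ℝ 2 u)
    (hu'' : ∀ t ∈ Icc (0:ℝ) 1, 0 < deriv (deriv u) t)
    (hf_lc : LogConcaveOn01 f)
    (hu_lc : LogConcaveOn01 (deriv (deriv u)))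
    (hratio : MonotoneOn (fun t => fhat t / f t) (Icc (0:ℝ) 1))
    (s x shat xhat : ℕ → ℝ)
    (h1 : DualSystem f (deriv (deriv u)) N s x)
    (h2 : DualSystem fhat (deriv (deriv u)) N shat xhat) :
    (∀ k, 1 ≤ k → k ≤ N - 1 → s k ≤ shat k) ∧
    (∀ k, 1 ≤ k → k ≤ N → x k ≤ xhat k) := by
  have hw : Continuous (deriv (deriv u)) := (hu.deriv' (n := 1)).continuous_deriv le_rfl
  have hgaps := gaps_nonpos_of_propagation (by omega) (D := fun k => s k - shat k)
    (E := fun k => x (k + 1) - xhat (k + 1)) (by simp [h1.1, h2.1]) (by simp [h1.2.1, h2.2.1])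
    (fun k hk δ hδ => signal_sub_lt hf_cont hf_pos hfhat_cont hfhat_pos hf_lc hratio h1 h2 hk hδ)
    (fun k hk δ hδ => cutoff_sub_lt hf_cont hf_pos hfhat_cont hfhat_pos hw hu'' hu_lc h1 h2
      (by omega) hδ)
  refine ⟨fun k hk₁ hk => ?_, fun k hk₁ hk => ?_⟩
  · linarith [(hgaps k (by omega)).1]
  · obtain ⟨j, rfl⟩ : ∃ j, k = j + 1 := ⟨k - 1, by omega⟩
    linarith [(hgaps j (by omega)).2]

/-- comparative statics: likelihood-ratio increase of the prior density. -/
theorem stmt_6 (f fhat u : ℝ → ℝ) (N : ℕ) (hN : 2 ≤ N)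
    (hf_cont : Continuous f) (hf_pos : ∀ t ∈ Icc (0:ℝ) 1, 0 < f t)
    (hf_prob : (∫ t in (0:ℝ)..1, f t) = 1)
    (hfhat_cont : Continuous fhat) (hfhat_pos : ∀ t ∈ Icc (0:ℝ) 1, 0 < fhat t)
    (hfhat_prob : (∫ t in (0:ℝ)..1, fhat t) = 1)
    (hu : ContDiff ℝ 2 u)
    (hu'' : ∀ t ∈ Icc (0:ℝ) 1, 0 < deriv (deriv u) t)
    (hf_lc : LogConcaveOn01 f) (hfhat_lc : LogConcaveOn01 fhat)
    (hu_lc : LogConcaveOn01 (deriv (deriv u)))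
    (hratio : MonotoneOn (fun t => fhat t / f t) (Icc (0:ℝ) 1))
    (s x shat xhat : ℕ → ℝ)
    (h1 : DualSystem f (deriv (deriv u)) N s x)
    (h2 : DualSystem fhat (deriv (deriv u)) N shat xhat) :
    (∀ k, 1 ≤ k → k ≤ N - 1 → s k ≤ shat k) ∧
    (∀ k, 1 ≤ k → k ≤ N → x k ≤ xhat k) :=
  stmt_6_general f fhat u N hN hf_cont hf_pos hfhat_cont hfhat_pos hu hu'' hf_lc hu_lc hratio s x
    shat xhat h1 h2
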